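/- arXiv:math/9811083 — 2 statements merged into one kernel-verified Lean document; each statement's English description precedes it below -/
import Mathlib

section
/- Let X ⊂ P^5 be the Segre embedding of P^2 × P^1, let F_1 = s(P^2 × {a}) for a fixed a ∈ P^1, let l be a line in P^2 and F_2 = s(l × P^1), and let L = F_1 ∩ F_2, a line. Then the projection π_L : X ⇢ P^3 with center L is a birational map. -/
open Projectivization Set

/-- `ℙ^(n-1)`-style projective space of the vector space `Fin n → k`. -/
abbrev Pk (k : Type*) [Field k] (n : ℕ) := Projectivization k (Fin n → k)

/-- Segre map on vectors. -/
def segV (k : Type*) [Field k] (x : Fin 3 → k) (y : Fin 2 → k) : Fin 6 → k :=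
  fun i => x ⟨i.1 / 2, by have := i.2; omega⟩ * y ⟨i.1 % 2, by omega⟩

theorem segV_ne_zero (k : Type*) [Field k] {x : Fin 3 → k} {y : Fin 2 → k}
    (hx : x ≠ 0) (hy : y ≠ 0) : segV k x y ≠ 0 := by
  obtain ⟨a, ha⟩ := Function.ne_iff.mp hx
  obtain ⟨b, hb⟩ := Function.ne_iff.mp hy
  intro h
  have ha2 := a.2
  have hb2 := b.2
  have h6 : 2 * a.1 + b.1 < 6 := by omega
  have hkey := congrFun h ⟨2 * a.1 + b.1, h6⟩
  simp only [segV, Pi.zero_apply] at hkey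
  have e1 : (⟨(2 * a.1 + b.1) / 2, by omega⟩ : Fin 3) = a := Fin.ext (by simp; omega)
  have e2 : (⟨(2 * a.1 + b.1) % 2, by omega⟩ : Fin 2) = b := Fin.ext (by simp; omega)
  rw [e1, e2] at hkey
  exact (mul_ne_zero ha hb) hkey

/-- The Segre embedding `s : ℙ² × ℙ¹ → ℙ⁵`. -/
noncomputable def segre (k : Type*) [Field k] (p : Pk k 3) (q : Pk k 2) : Pk k 6 :=
  Projectivization.mk k (segV k p.rep q.rep) (segV_ne_zero k p.rep_nonzero q.rep_nonzero)

/-- The Segre threefold `X = s(ℙ² × ℙ¹) ⊆ ℙ⁵`. -/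
def SegreX (k : Type*) [Field k] : Set (Pk k 6) := {z | ∃ p q, z = segre k p q}

/-- The set of points of projective space lying in a linear subspace `W`. -/
def projLin {k : Type*} [Field k] {n : ℕ} (W : Submodule k (Fin n → k)) : Set (Pk k n) :=
  {p | p.rep ∈ W}

/-- The plane `F₁ = s(ℙ² × {a})` of the ruling. -/
def F1set (k : Type*) [Field k] (a : Pk k 2) : Set (Pk k 6) := {z | ∃ p, z = segre k p a}
/-- The quadric surface `F₂ = s(l × ℙ¹)` for a line `l ⊆ ℙ²` (given by a 2-dimensional
vector subspace of `Fin 3 → k`). -/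
def F2set (k : Type*) [Field k] (l : Submodule k (Fin 3 → k)) : Set (Pk k 6) :=
  {z | ∃ p q, p.rep ∈ l ∧ z = segre k p q}

/-- The 2-dimensional vector subspace corresponding to the line `L = F₁ ∩ F₂ ⊆ ℙ⁵`. -/
def WL (k : Type*) [Field k] (l : Submodule k (Fin 3 → k)) (a : Pk k 2) :
    Submodule k (Fin 6 → k) :=
  Submodule.span k {v | ∃ x ∈ l, v = segV k x a.rep}

/-- A subset of projective space is (Zariski-)closed algebraic iff it is the common zero set
of a family of homogeneous polynomials. -/
def AlgSet {k : Type*} [Field k] {n : ℕ} (S : Set (Pk k n)) : Prop :=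
  ∃ T : Set (MvPolynomial (Fin n) k), (∀ f ∈ T, ∃ d, f.IsHomogeneous d) ∧
    S = {p | ∀ f ∈ T, MvPolynomial.eval p.rep f = 0}

/-- The linear projection `ℙ⁵ ⇢ ℙ³` induced by a linear map `π` (defined away from the
projectivization of `ker π`, junk value elsewhere). -/
noncomputable def projFrom (k : Type*) [Field k] (π : (Fin 6 → k) →ₗ[k] (Fin 4 → k))
    (p : Pk k 6) : Pk k 4 :=
  letI := Classical.propDecidable
  if h : π p.rep ≠ 0 then Projectivization.mk k (π p.rep) h
  else Projectivization.mk k (fun _ => 1) (fun h0 => one_ne_zero (congrFun h0 0))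

/-!
Choose a basis `x₀, x₁, x₂` of `k³` with `x₀, x₁` spanning `l`, and a basis `y₀, y₁` of `k²` with
`y₀` representing `a`. Then `L` is spanned by `s(x₀, y₀)` and `s(x₁, y₀)`, so in suitable
coordinates on `ℙ³` the projection sends `s(∑ cᵢ xᵢ, ∑ dⱼ yⱼ)` to `(c₀d₁ : c₁d₁ : c₂d₀ : c₂d₁)`.
Away from `c₂d₁ = 0`, resp. `w₃ = 0`, this is inverted by `w ↦ ((w₀ : w₁ : w₃), (w₂ : w₃))`.
-/

section

variable {k : Type*} [Field k]

lemma segV_finProdFinEquiv (x : Fin 3 → k) (y : Fin 2 → k) (i : Fin 3) (j : Fin 2) :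
    segV k x y (finProdFinEquiv (i, j)) = x i * y j := by
  simp only [segV, finProdFinEquiv, Equiv.coe_fn_mk]
  congr 2 <;> ext <;> simp <;> omega

def segreBilin (k : Type*) [Field k] :
    (Fin 3 → k) →ₗ[k] (Fin 2 → k) →ₗ[k] (Fin 6 → k) :=
  LinearMap.mk₂ k (segV k)
    (fun _ _ _ => funext fun _ => add_mul _ _ _)
    (fun _ _ _ => funext fun _ => mul_assoc _ _ _)
    (fun _ _ _ => funext fun _ => mul_add _ _ _)
    (fun _ _ _ => funext fun _ => mul_left_comm _ _ _)

@[simp]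
lemma segreBilin_apply (x : Fin 3 → k) (y : Fin 2 → k) : segreBilin k x y = segV k x y := rfl

lemma segV_single_one (i : Fin 3) (j : Fin 2) :
    segV k (Pi.single i 1) (Pi.single j 1) = Pi.single (finProdFinEquiv (i, j)) 1 := by
  ext m
  obtain ⟨⟨i', j'⟩, rfl⟩ := (finProdFinEquiv (m := 3) (n := 2)).surjective m
  rw [segV_finProdFinEquiv]
  simp only [Pi.single_apply, EmbeddingLike.apply_eq_iff_eq, Prod.mk.injEq]
  split_ifs <;> simp_all

lemma span_range_segV : Submodule.span k (Set.range (Function.uncurry (segV k))) = ⊤ := by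
  rw [eq_top_iff, ← (Pi.basisFun k (Fin 6)).span_eq]
  refine Submodule.span_mono ?_
  rintro _ ⟨m, rfl⟩
  obtain ⟨⟨i, j⟩, rfl⟩ := (finProdFinEquiv (m := 3) (n := 2)).surjective m
  exact ⟨(Pi.single i 1, Pi.single j 1), by simp [segV_single_one]⟩

lemma segV_eq_sum {ι₁ ι₂ : Type*} [Fintype ι₁] [Fintype ι₂] (B₁ : Module.Basis ι₁ k (Fin 3 → k))
    (B₂ : Module.Basis ι₂ k (Fin 2 → k)) (x : Fin 3 → k) (y : Fin 2 → k) :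
    segV k x y = ∑ i, ∑ j, (B₁.equivFun x i * B₂.equivFun y j) • segV k (B₁ i) (B₂ j) := by
  conv_lhs => rw [← B₁.sum_equivFun x, ← B₂.sum_equivFun y]
  simp only [← segreBilin_apply, map_sum, map_smul, LinearMap.sum_apply, LinearMap.smul_apply,
    Finset.smul_sum, smul_smul]
  rw [Finset.sum_comm]
  exact Finset.sum_congr rfl fun _ _ => Finset.sum_congr rfl fun _ _ => by rw [mul_comm]

lemma segV_mem_WL {l : Submodule k (Fin 3 → k)} {a : Pk k 2} {x : Fin 3 → k} {y : Fin 2 → k}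
    (hx : x ∈ l) (hy : y ∈ Submodule.span k {a.rep}) : segV k x y ∈ WL k l a := by
  obtain ⟨c, rfl⟩ := Submodule.mem_span_singleton.mp hy
  rw [← segreBilin_apply, map_smul, ← LinearMap.smul_apply, ← map_smul]
  exact Submodule.subset_span ⟨c • x, l.smul_mem c hx, rfl⟩

lemma segre_mk {x : Fin 3 → k} {y : Fin 2 → k} (hx : x ≠ 0) (hy : y ≠ 0) :
    segre k (mk k x hx) (mk k y hy) = mk k (segV k x y) (segV_ne_zero k hx hy) := by
  obtain ⟨s, hs⟩ := exists_smul_eq_mk_rep k x hx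
  obtain ⟨t, ht⟩ := exists_smul_eq_mk_rep k y hy
  rw [segre, mk_eq_mk_iff', ← hs, ← ht]
  exact ⟨(s * t : k), by simp [← segreBilin_apply, Units.smul_def, smul_smul, mul_comm]⟩

lemma Module.exists_basis_castSucc_mem {K V : Type*} [Field K] [AddCommGroup V] [Module K V]
    {n : ℕ} (W : Submodule K V) (hW : Module.finrank K W = n)
    (hV : Module.finrank K V = n + 1) :
    ∃ B : Module.Basis (Fin (n + 1)) K V, ∀ i : Fin n, B i.castSucc ∈ W := by
  have : Module.Finite K V := Module.finite_of_finrank_pos (by omega)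
  let bW := Module.finBasisOfFinrankEq K W hW
  obtain ⟨x, hx⟩ : ∃ x, x ∉ W := by
    by_contra! h
    have := finrank_top K V
    rw [← Submodule.eq_top_iff'.mpr h] at this
    omega
  have hli : LinearIndependent K (Fin.snoc (W.subtype ∘ bW) x : Fin (n + 1) → V) := by
    refine linearIndependent_finSnoc.mpr ⟨bW.linearIndependent.map' _ W.ker_subtype, ?_⟩
    rwa [Set.range_comp, ← Submodule.map_span, bW.span_eq, Submodule.map_subtype_top]
  refine ⟨basisOfLinearIndependentOfCardEqFinrank hli (by simp [hV]), fun i => ?_⟩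
  simp [coe_basisOfLinearIndependentOfCardEqFinrank]

section Hyperplane

variable {n : ℕ}

def projHyperplane (φ : (Fin n → k) →ₗ[k] k) : Set (Pk k n) := {p | φ p.rep = 0}

lemma mk_mem_projHyperplane_iff (φ : (Fin n → k) →ₗ[k] k) {v : Fin n → k} (hv : v ≠ 0) :
    mk k v hv ∈ projHyperplane φ ↔ φ v = 0 := by
  obtain ⟨t, ht⟩ := exists_smul_eq_mk_rep k v hv
  simp [projHyperplane, ← ht, Units.smul_def]

lemma algSet_projHyperplane (φ : (Fin n → k) →ₗ[k] k) : AlgSet (projHyperplane φ) := by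
  refine ⟨{∑ i, MvPolynomial.C (φ (Pi.single i 1)) * MvPolynomial.X i}, ?_, ?_⟩
  · rintro f rfl
    exact ⟨1, MvPolynomial.IsHomogeneous.sum _ _ _ fun i _ =>
      (MvPolynomial.isHomogeneous_X k i).C_mul _⟩
  · ext p
    change φ p.rep = 0 ↔ _
    conv_lhs => rw [pi_eq_sum_univ' p.rep]
    simp [mul_comm]

lemma projHyperplane_ne_univ {φ : (Fin n → k) →ₗ[k] k} (hφ : φ ≠ 0) :
    projHyperplane φ ≠ Set.univ := by
  obtain ⟨v, hv⟩ := DFunLike.ne_iff.mp hφ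
  have hv0 : v ≠ 0 := by rintro rfl; exact hv (map_zero φ)
  intro h
  exact hv ((mk_mem_projHyperplane_iff φ hv0).mp (h ▸ Set.mem_univ _))

end Hyperplane

section Projection

variable (π : (Fin 6 → k) →ₗ[k] (Fin 4 → k))

lemma projFrom_mk {v : Fin 6 → k} (hv : v ≠ 0) (h : π v ≠ 0) :
    projFrom k π (mk k v hv) = mk k (π v) h := by
  obtain ⟨t, ht⟩ := exists_smul_eq_mk_rep k v hv
  have h' : π (mk k v hv).rep ≠ 0 := by
    rwa [← ht, Units.smul_def, map_smul, smul_ne_zero_iff_right t.ne_zero]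
  rw [projFrom, dif_pos h', mk_eq_mk_iff']
  exact ⟨t, by rw [← ht, Units.smul_def, map_smul]⟩

lemma projFrom_eq_mk {p : Pk k 6} (h : π p.rep ≠ 0) : projFrom k π p = mk k (π p.rep) h := by
  rw [projFrom, dif_pos h]

lemma mapsTo_projFrom_compl_projHyperplane (φ : (Fin 4 → k) →ₗ[k] k) :
    Set.MapsTo (projFrom k π) (projHyperplane (φ ∘ₗ π))ᶜ (projHyperplane φ)ᶜ := by
  intro p hp
  have h : π p.rep ≠ 0 := fun h0 => hp (by simp [projHyperplane, h0])
  rwa [Set.mem_compl_iff, projFrom_eq_mk π h, mk_mem_projHyperplane_iff]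

end Projection

def segreProj (c : Fin 3 → k) (d : Fin 2 → k) : Fin 4 → k :=
  ![c 0 * d 1, c 1 * d 1, c 2 * d 0, c 2 * d 1]

lemma segreProj_three (c : Fin 3 → k) (d : Fin 2 → k) : segreProj c d 3 = c 2 * d 1 := rfl

lemma segreProj_section (w : Fin 4 → k) : segreProj ![w 0, w 1, w 3] ![w 2, w 3] = w 3 • w := by
  ext i; fin_cases i <;> simp [segreProj] <;> ring

lemma segreProj_eq_smul {c c' : Fin 3 → k} {d d' : Fin 2 → k} {s : k} (hcd : c 2 * d 1 ≠ 0)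
    (h : segreProj c d = s • segreProj c' d') :
    (∃ t : k, t • c' = c) ∧ ∃ t : k, t • d' = d := by
  obtain ⟨hc, hd⟩ := mul_ne_zero_iff.mp hcd
  have E0 : c 0 * d 1 = s * (c' 0 * d' 1) := congrFun h 0
  have E1 : c 1 * d 1 = s * (c' 1 * d' 1) := congrFun h 1
  have E2 : c 2 * d 0 = s * (c' 2 * d' 0) := congrFun h 2
  have E3 : c 2 * d 1 = s * (c' 2 * d' 1) := congrFun h 3
  refine ⟨⟨s * d' 1 / d 1, ?_⟩, ⟨s * c' 2 / c 2, ?_⟩⟩ <;> ext i <;> fin_cases i <;>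
    simp <;> field_simp
  · linear_combination -E0
  · linear_combination -E1
  · linear_combination -E3
  · linear_combination -E2
  · linear_combination -E3

lemma exists_segreProj_coordinates {l : Submodule k (Fin 3 → k)} {a : Pk k 2}
    (hl : Module.finrank k l = 2) {π : (Fin 6 → k) →ₗ[k] (Fin 4 → k)}
    (hπ : Function.Surjective π) (hker : LinearMap.ker π = WL k l a) :
    ∃ (e₁ : (Fin 3 → k) ≃ₗ[k] (Fin 3 → k)) (e₂ : (Fin 2 → k) ≃ₗ[k] (Fin 2 → k))
      (e : (Fin 4 → k) ≃ₗ[k] (Fin 4 → k)),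
      ∀ x y, e (π (segV k x y)) = segreProj (e₁ x) (e₂ y) := by
  obtain ⟨B₁, hB₁⟩ := Module.exists_basis_castSucc_mem l hl (Module.finrank_fin_fun k)
  obtain ⟨B₂, hB₂⟩ := Module.exists_basis_castSucc_mem (Submodule.span k {a.rep})
    (finrank_span_singleton a.rep_nonzero) (Module.finrank_fin_fun k)
  have hL : ∀ i : Fin 2, π (segV k (B₁ i.castSucc) (B₂ 0)) = 0 := fun i => by
    rw [← LinearMap.mem_ker, hker]
    exact segV_mem_WL (hB₁ i) (hB₂ 0)
  let u : Fin 4 → (Fin 4 → k) := ![π (segV k (B₁ 0) (B₂ 1)), π (segV k (B₁ 1) (B₂ 1)),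
    π (segV k (B₁ 2) (B₂ 0)), π (segV k (B₁ 2) (B₂ 1))]
  have hexp : ∀ x y, π (segV k x y) = ∑ i, segreProj (B₁.equivFun x) (B₂.equivFun y) i • u i := by
    intro x y
    have h0 := hL 0
    have h1 := hL 1
    simp only [Fin.castSucc_zero, Fin.castSucc_one] at h0 h1
    rw [segV_eq_sum B₁ B₂, map_sum]
    simp [Fin.sum_univ_succ, h0, h1, segreProj, u]
  have hspan : ⊤ ≤ Submodule.span k (Set.range u) := by
    rw [← LinearMap.range_eq_top.mpr hπ, LinearMap.range_eq_map, ← span_range_segV,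
      Submodule.map_span, Submodule.span_le]
    rintro _ ⟨_, ⟨⟨x, y⟩, rfl⟩, rfl⟩
    rw [Function.uncurry_apply_pair, hexp]
    exact Submodule.sum_mem _ fun i _ => Submodule.smul_mem _ _ (Submodule.subset_span ⟨i, rfl⟩)
  have hcard : Fintype.card (Fin 4) = Module.finrank k (Fin 4 → k) := by simp
  let Bu := basisOfTopLeSpanOfCardEqFinrank u hspan hcard
  refine ⟨B₁.equivFun, B₂.equivFun, Bu.equivFun, fun x y => ?_⟩
  rw [hexp, ← coe_basisOfTopLeSpanOfCardEqFinrank u hspan hcard,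
    ← Module.Basis.equivFun_symm_apply, LinearEquiv.apply_symm_apply]

lemma Projectivization.eq_of_map_rep_eq_smul {K V W : Type*} [Field K] [AddCommGroup V]
    [Module K V] [AddCommGroup W] [Module K W] (e : V ≃ₗ[K] W) {P P' : Projectivization K V}
    {t : K} (h : t • e P'.rep = e P.rep) : P = P' := by
  rw [← P.mk_rep, ← P'.mk_rep, mk_eq_mk_iff']
  exact ⟨t, e.injective (by rw [map_smul, h])⟩

section Birational

variable {π : (Fin 6 → k) →ₗ[k] (Fin 4 → k)} {e₁ : (Fin 3 → k) ≃ₗ[k] (Fin 3 → k)}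
  {e₂ : (Fin 2 → k) ≃ₗ[k] (Fin 2 → k)} {e : (Fin 4 → k) ≃ₗ[k] (Fin 4 → k)}

lemma map_segV_ne_zero (he : ∀ x y, e (π (segV k x y)) = segreProj (e₁ x) (e₂ y))
    {x : Fin 3 → k} {y : Fin 2 → k} (h : e₁ x 2 * e₂ y 1 ≠ 0) :
    π (segV k x y) ≠ 0 :=
  fun h0 => h (by rw [← segreProj_three, ← he, h0, map_zero, Pi.zero_apply])

lemma segre_mem_projHyperplane_iff (he : ∀ x y, e (π (segV k x y)) = segreProj (e₁ x) (e₂ y))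
    (P : Pk k 3) (Q : Pk k 2) :
    segre k P Q ∈ projHyperplane ((LinearMap.proj 3 ∘ₗ e.toLinearMap) ∘ₗ π) ↔
      e₁ P.rep 2 * e₂ Q.rep 1 = 0 := by
  rw [segre, mk_mem_projHyperplane_iff]
  exact Eq.congr_left (congrFun (he _ _) 3)

lemma bijOn_projFrom_segreX (he : ∀ x y, e (π (segV k x y)) = segreProj (e₁ x) (e₂ y)) :
    Set.BijOn (projFrom k π)
      (SegreX k \ projHyperplane ((LinearMap.proj 3 ∘ₗ e.toLinearMap) ∘ₗ π))
      (projHyperplane (LinearMap.proj 3 ∘ₗ e.toLinearMap))ᶜ := by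
  refine ⟨(mapsTo_projFrom_compl_projHyperplane π _).mono_left (Set.sdiff_subset_compl _ _),
    ?_, ?_⟩
  · rintro _ ⟨⟨P, Q, rfl⟩, hPQ⟩ _ ⟨⟨P', Q', rfl⟩, hPQ'⟩ heq
    rw [segre_mem_projHyperplane_iff he] at hPQ hPQ'
    rw [segre, segre, projFrom_mk π _ (map_segV_ne_zero he hPQ),
      projFrom_mk π _ (map_segV_ne_zero he hPQ'), mk_eq_mk_iff'] at heq
    obtain ⟨s, hs⟩ := heq
    have h : segreProj (e₁ P.rep) (e₂ Q.rep) = s • segreProj (e₁ P'.rep) (e₂ Q'.rep) := by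
      rw [← he, ← he, ← hs, map_smul]
    obtain ⟨⟨t₁, ht₁⟩, ⟨t₂, ht₂⟩⟩ := segreProj_eq_smul hPQ h
    rw [eq_of_map_rep_eq_smul e₁ ht₁, eq_of_map_rep_eq_smul e₂ ht₂]
  · intro q hq
    set w := e q.rep
    have hw : w 3 ≠ 0 := hq
    have hc : (![w 0, w 1, w 3] : Fin 3 → k) ≠ 0 := fun h => hw (by simpa using congrFun h 2)
    have hd : (![w 2, w 3] : Fin 2 → k) ≠ 0 := fun h => hw (by simpa using congrFun h 1)
    have hx := (e₁.symm.map_ne_zero_iff).mpr hc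
    have hy := (e₂.symm.map_ne_zero_iff).mpr hd
    have hxy : π (segV k (e₁.symm ![w 0, w 1, w 3]) (e₂.symm ![w 2, w 3])) = w 3 • q.rep :=
      e.injective (by rw [he, map_smul, e₁.apply_symm_apply, e₂.apply_symm_apply,
        segreProj_section])
    have hv : π (segV k _ _) ≠ 0 := hxy ▸ smul_ne_zero hw q.rep_nonzero
    refine ⟨segre k (mk k _ hx) (mk k _ hy), ⟨⟨_, _, rfl⟩, ?_⟩, ?_⟩
    · rw [segre_mk, mk_mem_projHyperplane_iff]
      simpa [hxy, w] using hw
    · rw [segre_mk, projFrom_mk π _ hv]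
      conv_rhs => rw [← q.mk_rep]
      exact (mk_eq_mk_iff' _ _ _ _ _).mpr ⟨w 3, hxy.symm⟩

end Birational

end

theorem statement2_general (k : Type*) [Field k]
    (a : Pk k 2) (l : Submodule k (Fin 3 → k)) (hl : Module.finrank k l = 2)
    (π : (Fin 6 → k) →ₗ[k] (Fin 4 → k)) (hπ : Function.Surjective π)
    (hker : LinearMap.ker π = WL k l a) :
    ∃ (Z : Set (Pk k 6)) (Z' : Set (Pk k 4)), AlgSet Z ∧ AlgSet Z' ∧
      (SegreX k \ Z).Nonempty ∧ Z' ≠ Set.univ ∧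
      Set.BijOn (projFrom k π) (SegreX k \ Z) (Set.univ \ Z') := by
  obtain ⟨e₁, e₂, e, he⟩ := exists_segreProj_coordinates hl hπ hker
  have hφ : LinearMap.proj 3 ∘ₗ e.toLinearMap ≠ 0 := fun h => by
    simpa using LinearMap.congr_fun h (e.symm (Pi.single 3 1))
  have hbij := bijOn_projFrom_segreX he
  rw [Set.compl_eq_univ_sdiff] at hbij
  refine ⟨_, _, algSet_projHyperplane _, algSet_projHyperplane _, ?_, projHyperplane_ne_univ hφ,
    hbij⟩
  have hne := Set.nonempty_compl.mpr (projHyperplane_ne_univ hφ)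
  rw [Set.compl_eq_univ_sdiff, ← hbij.image_eq] at hne
  exact Set.image_nonempty.mp hne

/-- the projection π_L : X ⇢ ℙ³ of the Segre threefold X = s(ℙ² × ℙ¹) from the
line L = F₁ ∩ F₂ is birational: away from a proper closed algebraic subset of X it is a
bijection onto the complement of a proper closed algebraic subset of ℙ³. Here the projection
is induced by a surjective linear map π whose kernel is the 2-dimensional space of L. -/
theorem statement2 (k : Type*) [Field k] [IsAlgClosed k]
    (a : Pk k 2) (l : Submodule k (Fin 3 → k)) (hl : Module.finrank k l = 2)
    (π : (Fin 6 → k) →ₗ[k] (Fin 4 → k)) (hπ : Function.Surjective π)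
    (hker : LinearMap.ker π = WL k l a) :
    ∃ (Z : Set (Pk k 6)) (Z' : Set (Pk k 4)), AlgSet Z ∧ AlgSet Z' ∧
      (SegreX k \ Z).Nonempty ∧ Z' ≠ Set.univ ∧
      Set.BijOn (projFrom k π) (SegreX k \ Z) (Set.univ \ Z') :=
  statement2_general k a l hl π hπ hker
end

section
/- Let U = Γ × P^1 ⊂ P^2 × P^1 ⊂ P^5 with Γ ⊂ P^2 a curve, and let F_1 = P^2 × {a}. Then the cone Φ = π_L(U) ⊂ P^3 depends only on the choice of the plane F_1 and not on the choice of the center line L ⊂ F_1: for any two lines L, L' ⊂ F_1 and a general ruling line b × P^1 of U, the linear span of L and b × P^1 equals the linear span of L' and b × P^1. -/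
open Projectivization Set

/-- The 3-dimensional vector subspace corresponding to the plane F₁ = s(ℙ² × {a}). -/
def WF1 (k : Type*) [Field k] (a : Pk k 2) : Submodule k (Fin 6 → k) :=
  Submodule.span k {v | ∃ x : Fin 3 → k, v = segV k x a.rep}

/-- The 2-dimensional vector subspace corresponding to the ruling line s({b} × ℙ¹). -/
def WRule (k : Type*) [Field k] (b : Pk k 3) : Submodule k (Fin 6 → k) :=
  Submodule.span k {v | ∃ y : Fin 2 → k, v = segV k b.rep y}


/-- The map `x ↦ segV k x y` as a linear map. -/
def segL (k : Type*) [Field k] (y : Fin 2 → k) : (Fin 3 → k) →ₗ[k] (Fin 6 → k) where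
  toFun x := segV k x y
  map_add' x x' := by funext i; simp [segV, add_mul]
  map_smul' c x := by funext i; simp [segV, mul_assoc]

theorem WF1_eq_range (k : Type*) [Field k] (a : Pk k 2) :
    WF1 k a = LinearMap.range (segL k a.rep) := by
  have hs : {v | ∃ x : Fin 3 → k, v = segV k x a.rep} = Set.range (segL k a.rep) := by
    ext v; constructor
    · rintro ⟨x, rfl⟩; exact ⟨x, rfl⟩
    · rintro ⟨x, rfl⟩; exact ⟨x, rfl⟩
  rw [WF1, hs, ← LinearMap.coe_range, Submodule.span_eq]

theorem finrank_WF1 (k : Type*) [Field k] (a : Pk k 2) :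
    Module.finrank k (WF1 k a) = 3 := by
  rw [WF1_eq_range]
  have hinj : Function.Injective (segL k a.rep) := by
    rw [← LinearMap.ker_eq_bot, LinearMap.ker_eq_bot']
    intro x hx
    by_contra hxne
    exact segV_ne_zero k hxne a.rep_nonzero hx
  rw [LinearMap.finrank_range_of_inj hinj]
  simp

theorem aux_sup (k : Type*) [Field k] (a : Pk k 2)
    (WL : Submodule k (Fin 6 → k)) (hWLF1 : WL ≤ WF1 k a)
    (h1 : Module.finrank k WL = 2)
    (b : Pk k 3) (hgen : segre k b a ∉ projLin WL) :
    WL ⊔ WRule k b = WF1 k a ⊔ WRule k b := by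
  set v := segV k b.rep a.rep with hv
  have hvne : v ≠ 0 := segV_ne_zero k b.rep_nonzero a.rep_nonzero
  have hvF1 : v ∈ WF1 k a := Submodule.subset_span ⟨b.rep, rfl⟩
  have hvR : v ∈ WRule k b := Submodule.subset_span ⟨a.rep, rfl⟩
  -- v ∉ WL
  have hvWL : v ∉ WL := by
    intro hmem
    apply hgen
    have : Projectivization.mk k v hvne = segre k b a := rfl
    have h2 := (Projectivization.mk_rep (segre k b a)).trans this.symm
    rw [Projectivization.mk_eq_mk_iff] at h2
    obtain ⟨c, hc⟩ := h2
    show (segre k b a).rep ∈ WL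
    rw [← hc]
    exact WL.smul_mem _ hmem
  -- WL ⊔ span v = WF1
  have hle : WL ⊔ Submodule.span k {v} ≤ WF1 k a :=
    sup_le hWLF1 ((Submodule.span_singleton_le_iff_mem v _).mpr hvF1)
  have hlt : WL < WL ⊔ Submodule.span k {v} := by
    refine lt_of_le_of_ne le_sup_left fun h => hvWL ?_
    rw [h]
    exact Submodule.mem_sup_right (Submodule.mem_span_singleton_self v)
  have hfin : Module.finrank k (WL ⊔ Submodule.span k {v} : Submodule k (Fin 6 → k)) = 3 := by
    have hgt : 2 < Module.finrank k (WL ⊔ Submodule.span k {v} : Submodule k (Fin 6 → k)) := by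
      rw [← h1]; exact Submodule.finrank_lt_finrank_of_lt hlt
    have hle3 : Module.finrank k (WL ⊔ Submodule.span k {v} : Submodule k (Fin 6 → k)) ≤ 3 := by
      rw [← finrank_WF1 k a]; exact Submodule.finrank_mono hle
    omega
  have heq : WL ⊔ Submodule.span k {v} = WF1 k a := by
    apply Submodule.eq_of_le_of_finrank_le hle
    rw [hfin, finrank_WF1]
  calc WL ⊔ WRule k b = WL ⊔ (Submodule.span k {v} ⊔ WRule k b) := by
        rw [sup_eq_right.mpr ((Submodule.span_singleton_le_iff_mem v _).mpr hvR)]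
      _ = (WL ⊔ Submodule.span k {v}) ⊔ WRule k b := by rw [sup_assoc]
      _ = WF1 k a ⊔ WRule k b := by rw [heq]

/-- the cone Φ = π_L(U) over U = Γ × ℙ¹ depends only on the plane
F₁ = ℙ² × {a} and not on the center line L ⊆ F₁: for any two lines L, L' ⊆ F₁ and any
general ruling line {b} × ℙ¹ of U (with b ∈ Γ and (b,a) ∉ L ∪ L'), the linear span of
L and {b} × ℙ¹ equals the linear span of L' and {b} × ℙ¹. -/
theorem statement9 (k : Type*) [Field k] [IsAlgClosed k]
    (n : ℕ) (f : MvPolynomial (Fin 3) k) (hf : f.IsHomogeneous n)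
    (a : Pk k 2)
    (WL1 WL2 : Submodule k (Fin 6 → k))
    (hWL1F1 : WL1 ≤ WF1 k a) (hWL2F1 : WL2 ≤ WF1 k a)
    (h1 : Module.finrank k WL1 = 2) (h2 : Module.finrank k WL2 = 2)
    (b : Pk k 3) (hb : MvPolynomial.eval b.rep f = 0)
    (hgen : segre k b a ∉ projLin WL1 ∪ projLin WL2) :
    WL1 ⊔ WRule k b = WL2 ⊔ WRule k b := by
  rw [Set.mem_union, not_or] at hgen
  rw [aux_sup k a WL1 hWL1F1 h1 b hgen.1, aux_sup k a WL2 hWL2F1 h2 b hgen.2]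
end
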